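/- Let n_a, n_b be positive integers, n = n_a + n_b, let θ*_a, θ*_b ∈ (0,1), and set θ_0 = (n_a/n)θ*_a + (n_b/n)θ*_b. Let Q be the distribution on {0,1}^n under which the first n_a coordinates are i.i.d. Bernoulli(θ*_a) and the last n_b coordinates are i.i.d. Bernoulli(θ*_b), independently. Define s(x) = ∏_{i=1}^{n_a} p_{θ*_a}(x_i)/p_{θ_0}(x_i) · ∏_{i=n_a+1}^{n} p_{θ*_b}(x_i)/p_{θ_0}(x_i), with p_η(y) = η^y(1−η)^{1−y}. Then for every nonnegative function s' on {0,1}^n satisfying E_{X ∼ Bernoulli(θ)^{⊗n}}[s'(X)] ≤ 1 for all θ ∈ [0,1], one has E_Q[log s'] ≤ E_Q[log s]. -/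

import Mathlib

/-- The logarithm of a nonnegative real, valued in the extended reals (`log 0 = ⊥`). -/
noncomputable def elogR (x : ℝ) : EReal := if x ≤ 0 then ⊥ else ((Real.log x : ℝ) : EReal)

/-!
The simple E-variable is the likelihood ratio `s = q / r` of the alternative `q` against the
single null member `r = Bernoulli(θ_0)^{⊗n}`. For any `s'` with `E_r[s'] ≤ 1`, the inequality
`log x ≤ x - 1` at `x = s'/s` gives `E_q[log s' - log s] ≤ E_q[s'/s] - 1 = E_r[s'] - 1 ≤ 0`.
Only the null member `θ_0` is ever tested; it lies in `[0, 1]` as a weighted mean of `θ*_a, θ*_b`.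
-/

open Finset Real Set

lemma EReal.coe_finsetSum {α : Type*} (t : Finset α) (g : α → ℝ) :
    ((∑ x ∈ t, g x : ℝ) : EReal) = ∑ x ∈ t, (g x : EReal) :=
  map_sum (⟨⟨Real.toEReal, EReal.coe_zero⟩, EReal.coe_add⟩ : ℝ →+ EReal) g t

lemma coe_mul_elogR_of_pos (c : ℝ) {y : ℝ} (hy : 0 < y) :
    (c : EReal) * elogR y = ((c * log y : ℝ) : EReal) := by
  rw [elogR, if_neg hy.not_ge, EReal.coe_mul]

section Gibbs

variable {α : Type*} [Fintype α] {q f : α → ℝ}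

lemma sum_coe_mul_elogR_of_pos (hf : ∀ x, 0 < f x) :
    ∑ x, (q x : EReal) * elogR (f x) = ((∑ x, q x * log (f x) : ℝ) : EReal) := by
  simp only [coe_mul_elogR_of_pos _ (hf _), EReal.coe_finsetSum]

lemma sum_coe_mul_elogR_eq_bot {x₀ : α} (hq : 0 < q x₀) (hf : f x₀ ≤ 0) :
    ∑ x, (q x : EReal) * elogR (f x) = ⊥ := by
  classical
  rw [← add_sum_erase _ _ (mem_univ x₀), elogR, if_pos hf,
    EReal.coe_mul_bot_of_pos hq, EReal.bot_add]

lemma mul_log_sub_mul_log_div_le {q r y : ℝ} (hq : 0 < q) (hr : 0 < r) (hy : 0 < y) :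
    q * log y - q * log (q / r) ≤ r * y - q :=
  calc q * log y - q * log (q / r) = q * log (r * y / q) := by
        rw [log_div hq.ne' hr.ne', log_div (by positivity) hq.ne', log_mul hr.ne' hy.ne']
        ring
    _ ≤ q * (r * y / q - 1) :=
        mul_le_mul_of_nonneg_left (log_le_sub_one_of_pos (by positivity)) hq.le
    _ = r * y - q := by field_simp

theorem sum_mul_elogR_le_sum_mul_elogR_div {r : α → ℝ} (hq : ∀ x, 0 < q x)
    (hq_sum : ∑ x, q x = 1) (hr : ∀ x, 0 < r x) (hf : ∑ x, r x * f x ≤ 1) :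
    ∑ x, (q x : EReal) * elogR (f x) ≤ ∑ x, (q x : EReal) * elogR (q x / r x) := by
  by_cases hf_pos : ∀ x, 0 < f x
  · rw [sum_coe_mul_elogR_of_pos hf_pos, sum_coe_mul_elogR_of_pos fun x => div_pos (hq x) (hr x),
      EReal.coe_le_coe_iff]
    have := sum_le_sum fun x (_ : x ∈ Finset.univ) =>
      mul_log_sub_mul_log_div_le (hq x) (hr x) (hf_pos x)
    rw [sum_sub_distrib, sum_sub_distrib, hq_sum] at this
    linarith
  · obtain ⟨x₀, hx₀⟩ := not_forall.1 hf_pos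
    rw [sum_coe_mul_elogR_eq_bot (hq x₀) (not_lt.1 hx₀)]
    exact bot_le

end Gibbs

lemma div_add_mul_add_div_add_mul_mem_Icc {a b x y : ℝ} (ha : 0 ≤ a) (hb : 0 ≤ b)
    (hx : x ∈ Icc (0 : ℝ) 1) (hy : y ∈ Icc (0 : ℝ) 1) :
    a / (a + b) * x + b / (a + b) * y ∈ Icc (0 : ℝ) 1 := by
  rcases (add_nonneg ha hb).eq_or_lt with hab | hab
  · simp [← hab]
  · exact convex_iff_div.1 (convex_Icc 0 1) hx hy ha hb hab

def bernoulliMass (η : ℝ) (y : Fin 2) : ℝ := η ^ (y : ℕ) * (1 - η) ^ (1 - (y : ℕ))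

lemma bernoulliMass_pos {η : ℝ} (hη : η ∈ Ioo (0 : ℝ) 1) (y : Fin 2) :
    0 < bernoulliMass η y := by
  fin_cases y <;> simp [bernoulliMass, hη.1, hη.2]

lemma sum_bernoulliMass (η : ℝ) : ∑ y, bernoulliMass η y = 1 := by
  simp [bernoulliMass, Fin.sum_univ_two]

section Product

variable {ι : Type*} [Fintype ι] {θ : ι → ℝ}

lemma prod_bernoulliMass_pos (hθ : ∀ i, θ i ∈ Ioo (0 : ℝ) 1) (x : ι → Fin 2) :
    0 < ∏ i, bernoulliMass (θ i) (x i) :=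
  prod_pos fun i _ => bernoulliMass_pos (hθ i) _

lemma sum_prod_bernoulliMass [DecidableEq ι] (θ : ι → ℝ) :
    ∑ x : ι → Fin 2, ∏ i, bernoulliMass (θ i) (x i) = 1 := by
  rw [← Fintype.prod_sum, prod_eq_one fun i _ => sum_bernoulliMass (θ i)]

end Product

theorem bernoulli_two_stream_GRO_general (na nb : ℕ)
    (θa θb : ℝ) (hθa : θa ∈ Set.Ioo (0 : ℝ) 1) (hθb : θb ∈ Set.Ioo (0 : ℝ) 1)
    (p : ℝ → Fin 2 → ℝ)
    (hp : p = fun (η : ℝ) (y : Fin 2) => η ^ (y : ℕ) * (1 - η) ^ (1 - (y : ℕ)))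
    (θ0 : ℝ)
    (hθ0 : θ0 = ((na : ℝ) / ((na : ℝ) + (nb : ℝ))) * θa
        + ((nb : ℝ) / ((na : ℝ) + (nb : ℝ))) * θb)
    (q : (Fin (na + nb) → Fin 2) → ℝ)
    (hq : q = fun x => ∏ i : Fin (na + nb),
      (if (i : ℕ) < na then p θa (x i) else p θb (x i)))
    (s : (Fin (na + nb) → Fin 2) → ℝ)
    (hs : s = fun x => ∏ i : Fin (na + nb),
      (if (i : ℕ) < na then p θa (x i) / p θ0 (x i) else p θb (x i) / p θ0 (x i)))
    (s' : (Fin (na + nb) → Fin 2) → ℝ)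
    (hs'E : ∀ θ ∈ Set.Icc (0 : ℝ) 1,
      ∑ x : Fin (na + nb) → Fin 2, (∏ i : Fin (na + nb), p θ (x i)) * s' x ≤ 1) :
    ∑ x : Fin (na + nb) → Fin 2, ((q x : ℝ) : EReal) * elogR (s' x) ≤
      ∑ x : Fin (na + nb) → Fin 2, ((q x : ℝ) : EReal) * elogR (s x) := by
  obtain rfl : p = bernoulliMass := hp
  have hθ0_mem : θ0 ∈ Icc (0 : ℝ) 1 := hθ0 ▸
    div_add_mul_add_div_add_mul_mem_Icc (Nat.cast_nonneg na) (Nat.cast_nonneg nb)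
      (Ioo_subset_Icc_self hθa) (Ioo_subset_Icc_self hθb)
  have hθ0_pos : ∀ i : Fin (na + nb), θ0 ∈ Ioo (0 : ℝ) 1 := fun i => hθ0 ▸
    convex_iff_div.1 (convex_Ioo 0 1) hθa hθb (Nat.cast_nonneg na) (Nat.cast_nonneg nb)
      (show (0 : ℝ) < na + nb by exact_mod_cast i.pos)
  have hs_div : s = fun x => q x / ∏ i, bernoulliMass θ0 (x i) := by
    simp only [hs, hq, ← ite_div, prod_div_distrib]
  have hq_prod :
      q = fun x => ∏ i : Fin (na + nb), bernoulliMass (if (i : ℕ) < na then θa else θb) (x i) := by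
    rw [hq]
    ext x
    congr! 2 with i
    split_ifs <;> rfl
  rw [hs_div]
  refine sum_mul_elogR_le_sum_mul_elogR_div (hq_prod ▸ prod_bernoulliMass_pos ?_)
    (hq_prod ▸ sum_prod_bernoulliMass _) (prod_bernoulliMass_pos hθ0_pos) (hs'E θ0 hθ0_mem)
  intro i
  split_ifs
  exacts [hθa, hθb]

/-- Theorem 1, part 2, instantiated to the Bernoulli model. With
`θ*_a, θ*_b ∈ (0,1)`, `θ_0 = (n_a/n)θ*_a + (n_b/n)θ*_b`, `Q` the product distribution on
`{0,1}^n` with parameters `θ*_a` (first `n_a` coordinates) and `θ*_b` (last `n_b`), and `s`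
the simple E-variable of equation (3.4), every nonnegative `s'` with expectation at most `1`
under every null `Bernoulli(θ)^{⊗n}` satisfies `E_Q[log s'] ≤ E_Q[log s]` (in the extended
reals). -/
theorem bernoulli_two_stream_GRO (na nb : ℕ) (hna : 0 < na) (hnb : 0 < nb)
    (θa θb : ℝ) (hθa : θa ∈ Set.Ioo (0 : ℝ) 1) (hθb : θb ∈ Set.Ioo (0 : ℝ) 1)
    (p : ℝ → Fin 2 → ℝ)
    (hp : p = fun (η : ℝ) (y : Fin 2) => η ^ (y : ℕ) * (1 - η) ^ (1 - (y : ℕ)))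
    (θ0 : ℝ)
    (hθ0 : θ0 = ((na : ℝ) / ((na : ℝ) + (nb : ℝ))) * θa
        + ((nb : ℝ) / ((na : ℝ) + (nb : ℝ))) * θb)
    (q : (Fin (na + nb) → Fin 2) → ℝ)
    (hq : q = fun x => ∏ i : Fin (na + nb),
      (if (i : ℕ) < na then p θa (x i) else p θb (x i)))
    (s : (Fin (na + nb) → Fin 2) → ℝ)
    (hs : s = fun x => ∏ i : Fin (na + nb),
      (if (i : ℕ) < na then p θa (x i) / p θ0 (x i) else p θb (x i) / p θ0 (x i)))
    (s' : (Fin (na + nb) → Fin 2) → ℝ) (hs'nn : ∀ x, 0 ≤ s' x)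
    (hs'E : ∀ θ ∈ Set.Icc (0 : ℝ) 1,
      ∑ x : Fin (na + nb) → Fin 2, (∏ i : Fin (na + nb), p θ (x i)) * s' x ≤ 1) :
    ∑ x : Fin (na + nb) → Fin 2, ((q x : ℝ) : EReal) * elogR (s' x) ≤
      ∑ x : Fin (na + nb) → Fin 2, ((q x : ℝ) : EReal) * elogR (s x) :=
  bernoulli_two_stream_GRO_general na nb θa θb hθa hθb p hp θ0 hθ0 q hq s hs s' hs'E
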